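/- The entropy rate of the neutral Moran process with μ = 1/2 (uniform mutations), namely H(P) = Σᵢ 2^{-N} C(N,i) · H((N-i)/(2N), 1/2, i/(2N)), converges to (3/2)·log 2 as N → ∞. -/

import Mathlib

open Finset

/-- Entropy rate H(P_N) = Σᵢ 2^{-N} C(N,i) H((N-i)/(2N), 1/2, i/(2N)) of the neutral
Moran process with uniform mutation rate μ = 1/2. -/
noncomputable def moranHalfEntropyRate (N : ℕ) : ℝ :=
  ∑ i ∈ range (N + 1), ((N.choose i : ℝ) / 2 ^ N) *
    (-( (((N : ℝ) - i) / (2 * N)) * Real.log (((N : ℝ) - i) / (2 * N))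
        + (1 / 2) * Real.log (1 / 2)
        + ((i : ℝ) / (2 * N)) * Real.log ((i : ℝ) / (2 * N)) ))

/-!
Splitting off the middle outcome, `H(Tᵢ) = log 2 + h(i/N) / 2` with `h` the binary entropy,
so `H(P_N) = log 2 + E[h(X/N)] / 2` for `X ~ Bin(N, 1/2)`. Since `log y ≤ y - 1`, the deficit
`log 2 - h(p)` (the divergence of `(p, 1-p)` from the uniform law) is at most the χ²-distance
`(2p - 1)²`, whose binomial mean is the variance of `2X/N`, namely `1/N`.
-/

open Real

theorem sum_range_choose_div_two_pow (n : ℕ) :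
    ∑ i ∈ range (n + 1), (n.choose i : ℝ) / 2 ^ n = 1 := by
  rw [← sum_div, div_eq_one_iff_eq (by positivity)]
  exact_mod_cast Nat.sum_range_choose n

theorem sum_range_choose_mul_two_mul_sub_sq (n : ℕ) :
    ∑ i ∈ range (n + 1), (n.choose i : ℝ) * (2 * i - n) ^ 2 = (n : ℝ) * 2 ^ n := by
  induction n with
  | zero => simp
  | succ n ih =>
    have hsum : ∑ i ∈ range (n + 1), (n.choose i : ℝ) = 2 ^ n := by
      exact_mod_cast Nat.sum_range_choose n
    calc ∑ i ∈ range (n + 1 + 1), ((n + 1).choose i : ℝ) * (2 * i - (n + 1 : ℕ)) ^ 2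
        = ∑ i ∈ range (n + 2), ((n + 1).choose i : ℝ) * ((i : ℝ) - (n + 1 - i : ℕ)) ^ 2 := by
          refine sum_congr rfl fun i hi => ?_
          push_cast [Nat.cast_sub (mem_range_succ_iff.mp hi)]
          ring
      _ = ∑ i ∈ range (n + 1), (n.choose i : ℝ) * (2 * (2 * i - n) ^ 2 + 2) := by
          rw [sum_choose_succ_mul (fun i j => ((i : ℝ) - j) ^ 2), ← sum_add_distrib]
          refine sum_congr rfl fun i hi => ?_
          have hi : i ≤ n := mem_range_succ_iff.mp hi
          push_cast [Nat.sub_add_comm hi, hi]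
          ring
      _ = (n + 1 : ℕ) * 2 ^ (n + 1) := by
          simp only [mul_add, sum_add_distrib, ← sum_mul, mul_left_comm _ (2 : ℝ), ← mul_sum, ih,
            hsum]
          push_cast
          ring

theorem sum_range_choose_div_two_pow_mul_two_mul_div_sub_one_sq {n : ℕ} (hn : n ≠ 0) :
    ∑ i ∈ range (n + 1), (n.choose i : ℝ) / 2 ^ n * (2 * (i / n) - 1) ^ 2 = 1 / (n : ℝ) := by
  have hn' : (n : ℝ) ≠ 0 := by exact_mod_cast hn
  calc ∑ i ∈ range (n + 1), (n.choose i : ℝ) / 2 ^ n * (2 * (i / n) - 1) ^ 2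
      = (∑ i ∈ range (n + 1), (n.choose i : ℝ) * (2 * i - n) ^ 2) / (2 ^ n * (n : ℝ) ^ 2) := by
        rw [sum_div]
        refine sum_congr rfl fun i _ => ?_
        field_simp
    _ = 1 / (n : ℝ) := by
        rw [sum_range_choose_mul_two_mul_sub_sq]
        field_simp

theorem mul_log_two_mul (p : ℝ) : p * log (2 * p) = p * log 2 - negMulLog p := by
  have h := negMulLog_mul 2 p
  simp only [negMulLog] at h ⊢
  linarith

theorem mul_log_two_mul_le {p : ℝ} (hp : 0 ≤ p) : p * log (2 * p) ≤ p * (2 * p - 1) := by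
  rcases hp.eq_or_lt with rfl | hp
  · simp
  · exact mul_le_mul_of_nonneg_left (log_le_sub_one_of_pos (by positivity)) hp.le

theorem log_two_sub_binEntropy_le_sq {p : ℝ} (hp₀ : 0 ≤ p) (hp₁ : p ≤ 1) :
    log 2 - binEntropy p ≤ (2 * p - 1) ^ 2 := by
  have h₀ := mul_log_two_mul_le hp₀
  have h₁ := mul_log_two_mul_le (sub_nonneg.mpr hp₁)
  rw [mul_log_two_mul] at h₀ h₁
  rw [binEntropy_eq_negMulLog_add_negMulLog_one_sub]
  nlinarith

theorem abs_sum_choose_div_two_pow_mul_binEntropy_sub_log_two_le {n : ℕ} (hn : n ≠ 0) :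
    |∑ i ∈ range (n + 1), (n.choose i : ℝ) / 2 ^ n * binEntropy (i / n) - log 2| ≤ 1 / (n : ℝ) := by
  have hw : ∀ i, (0 : ℝ) ≤ n.choose i / 2 ^ n := fun i => by positivity
  have hdeficit : log 2 - ∑ i ∈ range (n + 1), (n.choose i : ℝ) / 2 ^ n * binEntropy (i / n)
      = ∑ i ∈ range (n + 1), (n.choose i : ℝ) / 2 ^ n * (log 2 - binEntropy (i / n)) := by
    simp only [mul_sub, sum_sub_distrib, ← sum_mul, sum_range_choose_div_two_pow, one_mul]
  have hdeficit_nonneg : 0 ≤ log 2 - ∑ i ∈ range (n + 1),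
      (n.choose i : ℝ) / 2 ^ n * binEntropy (i / n) :=
    hdeficit ▸ sum_nonneg fun i _ => mul_nonneg (hw i) (sub_nonneg.mpr binEntropy_le_log_two)
  rw [abs_sub_comm, abs_of_nonneg hdeficit_nonneg, hdeficit,
    ← sum_range_choose_div_two_pow_mul_two_mul_div_sub_one_sq hn]
  refine sum_le_sum fun i hi => mul_le_mul_of_nonneg_left ?_ (hw i)
  exact log_two_sub_binEntropy_le_sq (by positivity)
    (div_le_one_of_le₀ (by exact_mod_cast mem_range_succ_iff.mp hi) (Nat.cast_nonneg n))

theorem tendsto_sum_choose_div_two_pow_mul_binEntropy :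
    Filter.Tendsto
      (fun n : ℕ => ∑ i ∈ range (n + 1), (n.choose i : ℝ) / 2 ^ n * binEntropy (i / n))
      Filter.atTop (nhds (log 2)) :=
  tendsto_iff_norm_sub_tendsto_zero.mpr <|
    squeeze_zero' (Filter.Eventually.of_forall fun _ => norm_nonneg _)
      ((Filter.eventually_ne_atTop 0).mono fun _ hn =>
        abs_sum_choose_div_two_pow_mul_binEntropy_sub_log_two_le hn)
      tendsto_one_div_atTop_nhds_zero_nat

theorem negMulLog_halfMixture (p : ℝ) :
    -(((1 - p) / 2) * log ((1 - p) / 2) + 1 / 2 * log (1 / 2) + (p / 2) * log (p / 2))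
      = log 2 + binEntropy p / 2 := by
  have hhalf : negMulLog (1 / 2) = log 2 / 2 := by simp only [negMulLog, one_div, log_inv]; ring
  have hscale := congrArg₂ (· + ·) (negMulLog_mul (1 - p) (1 / 2)) (negMulLog_mul p (1 / 2))
  simp only [← div_eq_mul_one_div, hhalf] at hscale
  rw [binEntropy_eq_negMulLog_add_negMulLog_one_sub]
  simp only [negMulLog] at hscale hhalf ⊢
  linarith

theorem moranHalfEntropyRate_eq {N : ℕ} (hN : N ≠ 0) :
    moranHalfEntropyRate N
      = log 2 + (∑ i ∈ range (N + 1), (N.choose i : ℝ) / 2 ^ N * binEntropy (i / N)) / 2 := by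
  have hN' : (N : ℝ) ≠ 0 := by exact_mod_cast hN
  have hsplit : ∀ i : ℕ,
      ((N : ℝ) - i) / (2 * N) = (1 - i / N) / 2 ∧ (i : ℝ) / (2 * N) = (i / N) / 2 :=
    fun i => ⟨by field_simp, by field_simp⟩
  simp only [moranHalfEntropyRate, hsplit, negMulLog_halfMixture, mul_add, sum_add_distrib,
    ← sum_mul, sum_range_choose_div_two_pow, one_mul, sum_div, mul_div_assoc]

theorem moranHalf_entropyRate_tendsto :
    Filter.Tendsto moranHalfEntropyRate Filter.atTop
      (nhds ((3 / 2) * Real.log 2)) := by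
  have hlim := (tendsto_sum_choose_div_two_pow_mul_binEntropy.div_const 2).const_add (log 2)
  rw [show log 2 + log 2 / 2 = 3 / 2 * log 2 by ring] at hlim
  refine hlim.congr' ?_
  filter_upwards [Filter.eventually_ne_atTop 0] with N hN
  exact (moranHalfEntropyRate_eq hN).symm
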